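/- arXiv:2406.06334 — 2 statements merged into one kernel-verified Lean document; each statement's English description precedes it below -/
import Mathlib

section
/- The region {(c₁, c₂): c₁ ≥ 0, c₂ ≥ 0} is forward invariant for the cell ODE system: if c₁(0), c₂(0) ≥ 0 then c₁(t), c₂(t) ≥ 0 for all t ≥ 0 in the interval of existence. -/
open Set Filter Topology

lemma left_deriv_nonpos {g : ℝ → ℝ} {g' t0 : ℝ} (ht0 : 0 < t0)
    (hd : HasDerivAt g g' t0) (h0 : g t0 ≤ 0)
    (hpos : ∀ t ∈ Set.Ico (0:ℝ) t0, 0 ≤ g t) : g' ≤ 0 := by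
  have hdw : HasDerivWithinAt g g' (Set.Iio t0) t0 := hd.hasDerivWithinAt
  rw [hasDerivWithinAt_iff_tendsto_slope' (by simp)] at hdw
  refine le_of_tendsto hdw ?_
  have hmem : Set.Iio t0 ∩ Set.Ioi 0 ∈ nhdsWithin t0 (Set.Iio t0) :=
    inter_mem_nhdsWithin _ (Ioi_mem_nhds ht0)
  filter_upwards [hmem] with t ht
  have h1 : 0 ≤ g t := hpos t ⟨le_of_lt ht.2, ht.1⟩
  have hlt : t < t0 := ht.1
  rw [slope_def_field]
  exact div_nonpos_iff.mpr (Or.inl ⟨by linarith, by linarith⟩)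

theorem cell_system_nonneg_invariant (ω1 ω2 β C1 C2 T : ℝ)
    (hω1 : 0 < ω1) (hω2 : 0 < ω2) (hβ : 0 < β) (hC1 : 0 < C1) (hC2 : 0 < C2)
    (hT : 0 < T)
    (α1 α2 c1 c2 : ℝ → ℝ)
    (hα1_cont : ContinuousOn α1 (Set.Icc 0 T)) (hα2_cont : ContinuousOn α2 (Set.Icc 0 T))
    (hα1_nn : ∀ t ∈ Set.Icc (0 : ℝ) T, 0 ≤ α1 t)
    (hα2_nn : ∀ t ∈ Set.Icc (0 : ℝ) T, 0 ≤ α2 t)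
    (h1 : ∀ t ∈ Set.Icc (0 : ℝ) T, HasDerivAt c1
      (-α1 t * c1 t + α2 t * (ω1 / ω2) * c2 t
        + β * c1 t * (1 - c1 t / C1 - c2 t / C2)) t)
    (h2 : ∀ t ∈ Set.Icc (0 : ℝ) T, HasDerivAt c2
      (α1 t * (ω2 / ω1) * c1 t - α2 t * c2 t) t)
    (hc10 : 0 ≤ c1 0) (hc20 : 0 ≤ c2 0) :
    ∀ t ∈ Set.Icc (0 : ℝ) T, 0 ≤ c1 t ∧ 0 ≤ c2 t := by
  have hc1c : ∀ t ∈ Set.Icc (0:ℝ) T, ContinuousAt c1 t := fun t ht => (h1 t ht).continuousAt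
  have hc2c : ∀ t ∈ Set.Icc (0:ℝ) T, ContinuousAt c2 t := fun t ht => (h2 t ht).continuousAt
  have hc1on : ContinuousOn c1 (Set.Icc 0 T) := fun t ht => (hc1c t ht).continuousWithinAt
  have hc2on : ContinuousOn c2 (Set.Icc 0 T) := fun t ht => (hc2c t ht).continuousWithinAt
  -- bounds on coefficients
  obtain ⟨A1, hA1⟩ := isCompact_Icc.exists_bound_of_continuousOn
    (f := fun t => α1 t * (ω2/ω1)) (hα1_cont.mul continuousOn_const)
  obtain ⟨A2, hA2⟩ := isCompact_Icc.exists_bound_of_continuousOn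
    (f := fun t => α2 t * (ω1/ω2)) (hα2_cont.mul continuousOn_const)
  obtain ⟨M, hM⟩ := isCompact_Icc.exists_bound_of_continuousOn
    (f := fun t => 1 - c1 t / C1 - c2 t / C2)
    ((continuousOn_const.sub (hc1on.div_const C1)).sub (hc2on.div_const C2))
  set K : ℝ := |A1| + |A2| + β * |M| + 1 with hKdef
  have hK0 : 0 < K := by positivity
  have hexpc : Continuous (fun t : ℝ => Real.exp (K*t)) :=
    Real.continuous_exp.comp (continuous_const.mul continuous_id)
  -- key claim: strict barrier for every ε > 0
  have key : ∀ ε : ℝ, 0 < ε → ∀ t ∈ Set.Icc (0:ℝ) T,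
      -ε * Real.exp (K*t) < c1 t ∧ -ε * Real.exp (K*t) < c2 t := by
    intro ε hε
    by_contra hcon
    obtain ⟨t₁, ht₁, hbad⟩ : ∃ t, t ∈ Set.Icc (0:ℝ) T ∧
        (c1 t ≤ -ε*Real.exp (K*t) ∨ c2 t ≤ -ε*Real.exp (K*t)) := by
      by_contra h
      push_neg at h
      exact hcon h
    -- the "bad" set and its first point
    set b : ℝ → ℝ := fun t => -ε * Real.exp (K*t) with hbdef
    have hbcont : Continuous b := continuous_const.mul hexpc
    set S : Set ℝ := {t | t ∈ Set.Icc (0:ℝ) T ∧ (c1 t ≤ b t ∨ c2 t ≤ b t)} with hSdef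
    have hSclosed : IsClosed S := by
      have hrepr : S = (Set.Icc (0:ℝ) T ∩ (fun t => c1 t - b t) ⁻¹' Set.Iic 0)
          ∪ (Set.Icc (0:ℝ) T ∩ (fun t => c2 t - b t) ⁻¹' Set.Iic 0) := by
        ext t
        simp only [hSdef, Set.mem_setOf_eq, Set.mem_union, Set.mem_inter_iff,
          Set.mem_preimage, Set.mem_Iic]
        constructor
        · rintro ⟨hIcc, hd | hd⟩
          exacts [Or.inl ⟨hIcc, by linarith⟩, Or.inr ⟨hIcc, by linarith⟩]
        · rintro (⟨hIcc, hd⟩ | ⟨hIcc, hd⟩)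
          exacts [⟨hIcc, Or.inl (by linarith)⟩, ⟨hIcc, Or.inr (by linarith)⟩]
      rw [hrepr]
      exact IsClosed.union
        (ContinuousOn.preimage_isClosed_of_isClosed (hc1on.sub hbcont.continuousOn)
          isClosed_Icc isClosed_Iic)
        (ContinuousOn.preimage_isClosed_of_isClosed (hc2on.sub hbcont.continuousOn)
          isClosed_Icc isClosed_Iic)
    have hSne : S.Nonempty := ⟨t₁, ht₁, hbad⟩
    have hSbdd : BddBelow S := ⟨0, fun t htS => htS.1.1⟩
    set t0 : ℝ := sInf S with ht0def
    have ht0S : t0 ∈ S := hSclosed.csInf_mem hSne hSbdd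
    have ht0Icc : t0 ∈ Set.Icc (0:ℝ) T := ht0S.1
    have hbefore : ∀ t, 0 ≤ t → t < t0 → b t < c1 t ∧ b t < c2 t := by
      intro t h0t htt0
      have htS : t ∉ S := fun hts => absurd (csInf_le hSbdd hts) (not_le.mpr htt0)
      have htIcc : t ∈ Set.Icc (0:ℝ) T := ⟨h0t, le_trans htt0.le ht0Icc.2⟩
      constructor
      · by_contra hcc; exact htS ⟨htIcc, Or.inl (not_lt.mp hcc)⟩
      · by_contra hcc; exact htS ⟨htIcc, Or.inr (not_lt.mp hcc)⟩
    have ht0pos : 0 < t0 := by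
      rcases eq_or_lt_of_le ht0Icc.1 with hh | hh
      · exfalso
        have hb0 : b 0 = -ε := by simp [hbdef]
        rcases ht0S.2 with hd | hd <;> rw [← hh] at hd <;> rw [hb0] at hd <;> linarith
      · exact hh
    -- at t0, both are ≥ b by left continuity
    have hlim : ∀ c : ℝ → ℝ, ContinuousAt c t0 → (∀ t, 0 ≤ t → t < t0 → b t < c t) →
        b t0 ≤ c t0 := by
      intro c hc hlt
      have hten : Tendsto (fun t => c t - b t) (nhdsWithin t0 (Set.Iio t0)) (nhds (c t0 - b t0)) :=
        ((hc.sub hbcont.continuousAt).tendsto).mono_left nhdsWithin_le_nhds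
      have hNB : (nhdsWithin t0 (Set.Iio t0)).NeBot := nhdsLT_neBot t0
      have h0le : 0 ≤ c t0 - b t0 := by
        refine ge_of_tendsto hten ?_
        have hmem : Set.Iio t0 ∩ Set.Ioi 0 ∈ nhdsWithin t0 (Set.Iio t0) :=
          inter_mem_nhdsWithin _ (Ioi_mem_nhds ht0pos)
        filter_upwards [hmem] with t htm
        have := hlt t (le_of_lt htm.2) htm.1
        linarith
      linarith
    have hc1ge : b t0 ≤ c1 t0 := hlim c1 (hc1c t0 ht0Icc) (fun t a h => (hbefore t a h).1)
    have hc2ge : b t0 ≤ c2 t0 := hlim c2 (hc2c t0 ht0Icc) (fun t a h => (hbefore t a h).2)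
    -- common quantities
    set E : ℝ := Real.exp (K*t0) with hEdef
    have hE : 0 < E := Real.exp_pos _
    have hεE : 0 < ε * E := mul_pos hε hE
    have hdb : HasDerivAt b (-ε * (Real.exp (K*t0) * (K*1))) t0 :=
      (((hasDerivAt_id t0).const_mul K).exp).const_mul (-ε)
    rcases ht0S.2 with hc | hc
    · -- c1 hits the barrier
      have heq : c1 t0 = b t0 := le_antisymm hc hc1ge
      have hd1 := h1 t0 ht0Icc
      have hg : HasDerivAt (fun t => c1 t - b t)
          ((-α1 t0 * c1 t0 + α2 t0 * (ω1/ω2) * c2 t0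
            + β * c1 t0 * (1 - c1 t0/C1 - c2 t0/C2)) - (-ε * (Real.exp (K*t0) * (K*1)))) t0 :=
        hd1.sub hdb
      have hle : (-α1 t0 * c1 t0 + α2 t0 * (ω1/ω2) * c2 t0
            + β * c1 t0 * (1 - c1 t0/C1 - c2 t0/C2)) - (-ε * (Real.exp (K*t0) * (K*1))) ≤ 0 := by
        refine left_deriv_nonpos ht0pos hg (by rw [heq]; ring_nf; exact le_refl 0) ?_
        intro t htm
        have := hbefore t htm.1 htm.2
        linarith [this.1]
      -- now derive a contradiction from the estimates
      have hb0 : b t0 = -ε * E := rfl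
      have hval : c1 t0 = -(ε * E) := by rw [heq, hb0]; ring
      have hc2lb : -(ε * E) ≤ c2 t0 := by rw [← hval, heq]; exact hc2ge
      have hα1nn := hα1_nn t0 ht0Icc
      have hα2w_nn : 0 ≤ α2 t0 * (ω1/ω2) :=
        mul_nonneg (hα2_nn t0 ht0Icc) (div_nonneg hω1.le hω2.le)
      have hα2w_ub : α2 t0 * (ω1/ω2) ≤ |A2| := by
        have := hA2 t0 ht0Icc
        rw [Real.norm_eq_abs] at this
        calc α2 t0 * (ω1/ω2) ≤ |α2 t0 * (ω1/ω2)| := le_abs_self _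
          _ ≤ A2 := this
          _ ≤ |A2| := le_abs_self _
      have hrbd : |1 - c1 t0/C1 - c2 t0/C2| ≤ |M| := by
        have := hM t0 ht0Icc
        rw [Real.norm_eq_abs] at this
        exact this.trans (le_abs_self _)
      have hrub : 1 - c1 t0/C1 - c2 t0/C2 ≤ |M| := (le_abs_self _).trans hrbd
      have hrlb : -|M| ≤ 1 - c1 t0/C1 - c2 t0/C2 := neg_le_of_abs_le hrbd
      -- term estimates
      have hterm1 : 0 ≤ -α1 t0 * c1 t0 := by
        rw [hval]
        have := mul_nonneg hα1nn hεE.le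
        nlinarith
      have hterm2 : |A2| * (-(ε*E)) ≤ α2 t0 * (ω1/ω2) * c2 t0 := by
        have h2a := mul_le_mul_of_nonneg_left hc2lb hα2w_nn
        have h2b := mul_le_mul_of_nonpos_right hα2w_ub (by linarith : -(ε*E) ≤ 0)
        linarith
      have hterm3 : -(β * |M|) * (ε*E) ≤ β * c1 t0 * (1 - c1 t0/C1 - c2 t0/C2) := by
        have h3a : β * (ε*E) * (1 - c1 t0/C1 - c2 t0/C2) ≤ β * (ε*E) * |M| :=
          mul_le_mul_of_nonneg_left hrub (by positivity)
        have hrw : β * c1 t0 * (1 - c1 t0/C1 - c2 t0/C2)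
            = -(β * (ε*E) * (1 - c1 t0/C1 - c2 t0/C2)) := by rw [hval]; ring
        rw [hrw]
        linarith
      have hKval : -ε * (Real.exp (K*t0) * (K*1)) = -(K * (ε*E)) := by
        rw [← hEdef]; ring
      rw [hKval, hKdef] at hle
      linarith [mul_nonneg (abs_nonneg A1) hεE.le]
    · -- c2 hits the barrier
      have heq : c2 t0 = b t0 := le_antisymm hc hc2ge
      have hd2 := h2 t0 ht0Icc
      have hg : HasDerivAt (fun t => c2 t - b t)
          ((α1 t0 * (ω2/ω1) * c1 t0 - α2 t0 * c2 t0) - (-ε * (Real.exp (K*t0) * (K*1)))) t0 :=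
        hd2.sub hdb
      have hle : (α1 t0 * (ω2/ω1) * c1 t0 - α2 t0 * c2 t0)
            - (-ε * (Real.exp (K*t0) * (K*1))) ≤ 0 := by
        refine left_deriv_nonpos ht0pos hg (by rw [heq]; ring_nf; exact le_refl 0) ?_
        intro t htm
        have := hbefore t htm.1 htm.2
        linarith [this.2]
      have hb0 : b t0 = -ε * E := rfl
      have hval : c2 t0 = -(ε * E) := by rw [heq, hb0]; ring
      have hc1lb : -(ε * E) ≤ c1 t0 := by rw [← hval, heq]; exact hc1ge
      have hα2nn := hα2_nn t0 ht0Icc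
      have hα1w_nn : 0 ≤ α1 t0 * (ω2/ω1) :=
        mul_nonneg (hα1_nn t0 ht0Icc) (div_nonneg hω2.le hω1.le)
      have hα1w_ub : α1 t0 * (ω2/ω1) ≤ |A1| := by
        have := hA1 t0 ht0Icc
        rw [Real.norm_eq_abs] at this
        calc α1 t0 * (ω2/ω1) ≤ |α1 t0 * (ω2/ω1)| := le_abs_self _
          _ ≤ A1 := this
          _ ≤ |A1| := le_abs_self _
      have hterm1 : |A1| * (-(ε*E)) ≤ α1 t0 * (ω2/ω1) * c1 t0 := by
        have h2a := mul_le_mul_of_nonneg_left hc1lb hα1w_nn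
        have h2b := mul_le_mul_of_nonpos_right hα1w_ub (by linarith : -(ε*E) ≤ 0)
        linarith
      have hterm2 : 0 ≤ -(α2 t0 * c2 t0) := by
        rw [hval]
        have := mul_nonneg hα2nn hεE.le
        nlinarith
      have hKval : -ε * (Real.exp (K*t0) * (K*1)) = -(K * (ε*E)) := by
        rw [← hEdef]; ring
      rw [hKval, hKdef] at hle
      linarith [mul_nonneg (abs_nonneg A2) hεE.le,
        mul_nonneg (mul_nonneg hβ.le (abs_nonneg M)) hεE.le]
  -- conclude
  intro t ht
  have hEpos : 0 < Real.exp (K*t) := Real.exp_pos _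
  constructor
  · by_contra h
    push_neg at h
    have hε : 0 < (-c1 t) / (2 * Real.exp (K*t)) := div_pos (by linarith) (by positivity)
    have hk := (key _ hε t ht).1
    have : -((-c1 t) / (2 * Real.exp (K*t))) * Real.exp (K*t) = c1 t / 2 := by
      field_simp
    rw [this] at hk
    linarith
  · by_contra h
    push_neg at h
    have hε : 0 < (-c2 t) / (2 * Real.exp (K*t)) := div_pos (by linarith) (by positivity)
    have hk := (key _ hε t ht).2
    have : -((-c2 t) / (2 * Real.exp (K*t))) * Real.exp (K*t) = c2 t / 2 := by
      field_simp
    rw [this] at hk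
    linarith
end

section
/- If c₂(t) ≤ C₂* for all t, any nonnegative solution of the hyaluron equation h' = −γ₁(c₁/C₁*)h − γ₂(c₂/C₂*)h + γ₃c₂/(1 + c₂/C₂*) with h(0) ≥ 0 satisfies 0 ≤ h(t) ≤ max(h(0), (γ₃C₂*/2)·(C₂*/(γ₂·c₂_inf))) for all t, provided inf c₂ = c₂_inf > 0 — in particular h stays nonnegative and the production term is bounded by γ₃C₂*/2. -/
/-- Barrier lemma: if `h 0 ≤ b` and the derivative of `h` is strictly negative
whenever `h` exceeds `b` (on `[0,∞)`), then `h t ≤ b` for all `t ≥ 0`. -/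
lemma barrier_lemma (h f : ℝ → ℝ) (b : ℝ)
    (hd : ∀ t ≥ (0:ℝ), HasDerivAt h (f t) t)
    (hneg : ∀ t ≥ (0:ℝ), b < h t → f t < 0)
    (hb0 : h 0 ≤ b) : ∀ t ≥ (0:ℝ), h t ≤ b := by
  intro t₀ ht₀
  by_contra hcon
  push_neg at hcon
  have hcont : ∀ t ≥ (0:ℝ), ContinuousAt h t := fun t ht => (hd t ht).continuousAt
  set g : ℝ → ℝ := fun t => h (max t 0) with hg
  have hgcont : Continuous g := by
    rw [continuous_iff_continuousAt]
    intro x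
    have hmax : ContinuousAt (fun t : ℝ => max t 0) x :=
      (continuous_id.max continuous_const).continuousAt
    exact ContinuousAt.comp (hcont _ (le_max_right x 0)) hmax
  set S : Set ℝ := Set.Icc 0 t₀ ∩ g ⁻¹' Set.Iic b with hS
  have hScompact : IsCompact S :=
    (isCompact_Icc).inter_right (isClosed_Iic.preimage hgcont)
  have h0S : (0:ℝ) ∈ S := ⟨⟨le_refl 0, ht₀⟩, by simpa [hg] using hb0⟩
  have hSne : S.Nonempty := ⟨0, h0S⟩
  have hsS : sSup S ∈ S := hScompact.sSup_mem hSne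
  obtain ⟨s, hs_def⟩ : ∃ s, sSup S = s := ⟨sSup S, rfl⟩
  rw [hs_def] at hsS
  obtain ⟨⟨hs0, hst⟩, hsb⟩ := hsS
  have hgs : h s ≤ b := by simpa [hg, max_eq_left hs0] using hsb
  have hslt : s < t₀ := lt_of_le_of_ne hst (by rintro rfl; exact absurd hgs (not_le.mpr hcon))
  have habove : ∀ x ∈ Set.Ioc s t₀, b < h x := by
    intro x hx
    by_contra hxb
    push_neg at hxb
    have hx0 : (0:ℝ) ≤ x := hs0.trans hx.1.le
    have hxS : x ∈ S := ⟨⟨hx0, hx.2⟩, by simpa [hg, max_eq_left hx0] using hxb⟩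
    exact absurd (hs_def ▸ le_csSup hScompact.bddAbove hxS) (not_le.mpr hx.1)
  have hanti : StrictAntiOn h (Set.Icc s t₀) := by
    apply strictAntiOn_of_deriv_neg (convex_Icc s t₀)
    · intro x hx
      exact (hcont x (hs0.trans hx.1)).continuousWithinAt
    · intro x hx
      rw [interior_Icc] at hx
      have hx0 : (0:ℝ) ≤ x := hs0.trans hx.1.le
      rw [(hd x hx0).deriv]
      exact hneg x hx0 (habove x ⟨hx.1, hx.2.le⟩)
  have hlt := hanti (Set.left_mem_Icc.mpr hslt.le) (Set.right_mem_Icc.mpr hslt.le) hslt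
  linarith

theorem hyaluron_bounds (γ1 γ2 γ3 C1 C2 : ℝ)
    (hγ1 : 0 < γ1) (hγ2 : 0 < γ2) (hγ3 : 0 < γ3) (hC1 : 0 < C1) (hC2 : 0 < C2)
    (c1 c2 h : ℝ → ℝ) (m : ℝ) (hm : 0 < m)
    (hc1_cont : ContinuousOn c1 (Set.Ici 0)) (hc2_cont : ContinuousOn c2 (Set.Ici 0))
    (hc1_nn : ∀ t ≥ (0 : ℝ), 0 ≤ c1 t)
    (hc2_inf : ∀ t ≥ (0 : ℝ), m ≤ c2 t) (hc2_ub : ∀ t ≥ (0 : ℝ), c2 t ≤ C2)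
    (hode : ∀ t ≥ (0 : ℝ), HasDerivAt h
      (-γ1 * (c1 t / C1) * h t - γ2 * (c2 t / C2) * h t
        + γ3 * c2 t / (1 + c2 t / C2)) t)
    (hh0 : 0 ≤ h 0) :
    (∀ t ≥ (0 : ℝ), 0 ≤ h t ∧ h t ≤ max (h 0) (γ3 * C2 / 2 * (C2 / (γ2 * m)))) ∧
    (∀ t ≥ (0 : ℝ), γ3 * c2 t / (1 + c2 t / C2) ≤ γ3 * C2 / 2) := by
  -- Part 2: bound on the production term
  have hprod : ∀ t ≥ (0 : ℝ), γ3 * c2 t / (1 + c2 t / C2) ≤ γ3 * C2 / 2 := by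
    intro t ht
    have hc2m := hc2_inf t ht
    have hc2u := hc2_ub t ht
    have hc2pos : 0 < c2 t := lt_of_lt_of_le hm hc2m
    have hD : 0 < 1 + c2 t / C2 := by positivity
    rw [div_le_iff₀ hD]
    have e : c2 t / C2 * C2 = c2 t := div_mul_cancel₀ _ (ne_of_gt hC2)
    nlinarith [mul_le_mul_of_nonneg_left hc2u hγ3.le, mul_pos hγ3 hc2pos]
  -- positivity of the production term
  have hprodpos : ∀ t ≥ (0 : ℝ), 0 < γ3 * c2 t / (1 + c2 t / C2) := by
    intro t ht
    have hc2pos : 0 < c2 t := lt_of_lt_of_le hm (hc2_inf t ht)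
    positivity
  -- Nonnegativity via the barrier lemma applied to -h
  have hnn : ∀ t ≥ (0 : ℝ), 0 ≤ h t := by
    have key := barrier_lemma (fun t => -h t)
      (fun t => -(-γ1 * (c1 t / C1) * h t - γ2 * (c2 t / C2) * h t
        + γ3 * c2 t / (1 + c2 t / C2))) 0
      (fun t ht => (hode t ht).neg)
      (by
        intro t ht hpos
        simp only [neg_lt_zero, Left.nonneg_neg_iff] at *
        have hht : h t < 0 := by linarith
        have hc1t := hc1_nn t ht
        have hc2pos : 0 < c2 t := lt_of_lt_of_le hm (hc2_inf t ht)
        have hq1 : 0 ≤ c1 t / C1 := by positivity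
        have hq2 : 0 < c2 t / C2 := by positivity
        have h1 : 0 ≤ -γ1 * (c1 t / C1) * h t := by
          nlinarith [mul_nonneg (mul_nonneg hγ1.le hq1) (neg_nonneg.mpr hht.le)]
        have h2 : 0 < -γ2 * (c2 t / C2) * h t := by
          nlinarith [mul_pos (mul_pos hγ2 hq2) (neg_pos.mpr hht)]
        have h3 := hprodpos t ht
        linarith)
      (by simpa using hh0)
    intro t ht
    have := key t ht
    simpa using this
  -- Upper bound via the barrier lemma
  set M := max (h 0) (γ3 * C2 / 2 * (C2 / (γ2 * m))) with hM
  have hub : ∀ t ≥ (0 : ℝ), h t ≤ M := by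
    apply barrier_lemma h _ M hode
    · intro t ht hMt
      have hc1t := hc1_nn t ht
      have hc2m := hc2_inf t ht
      have hMge : γ3 * C2 / 2 * (C2 / (γ2 * m)) ≤ M := le_max_right _ _
      have hhpos : 0 < h t := by
        have : 0 < γ3 * C2 / 2 * (C2 / (γ2 * m)) := by positivity
        linarith
      have hq1 : 0 ≤ c1 t / C1 := by positivity
      have h1 : -γ1 * (c1 t / C1) * h t ≤ 0 := by
        nlinarith [mul_nonneg (mul_nonneg hγ1.le hq1) hhpos.le]
      have h2 : -γ2 * (c2 t / C2) * h t ≤ -γ2 * (m / C2) * h t := by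
        have hmono : m / C2 ≤ c2 t / C2 := by gcongr
        nlinarith [mul_le_mul_of_nonneg_left
          (mul_le_mul_of_nonneg_right hmono hhpos.le) hγ2.le]
      have h3 := hprod t ht
      have key : γ2 * (m / C2) * (γ3 * C2 / 2 * (C2 / (γ2 * m))) = γ3 * C2 / 2 := by
        field_simp
      have h4 : γ3 * C2 / 2 < γ2 * (m / C2) * h t := by
        have hk : 0 < γ2 * (m / C2) := by positivity
        calc γ3 * C2 / 2 = γ2 * (m / C2) * (γ3 * C2 / 2 * (C2 / (γ2 * m))) := key.symm
          _ ≤ γ2 * (m / C2) * M := by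
              exact mul_le_mul_of_nonneg_left hMge hk.le
          _ < γ2 * (m / C2) * h t := by
              exact mul_lt_mul_of_pos_left hMt hk
      linarith
    · exact le_max_left _ _
  exact ⟨fun t ht => ⟨hnn t ht, hub t ht⟩, hprod⟩
end
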